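/- If W : [0,1] → ℝ^{M×M} is a differentiable solution of the ETKBF equation dW/ds = − (1/(2(M−1))) · W Wᵀ S W with W(0) = I, where S := (Y^b)ᵀ R⁻¹ Y^b, then for every s ∈ [0,1] one has W(s) W(s)ᵀ / (M−1) = (s·S + (M−1)·I)⁻¹. In particular W(1) W(1)ᵀ / (M−1) = (S + (M−1) I)⁻¹, so the ETKBF analysis covariance coincides with the LETKF analysis covariance in ensemble space. -/

import Mathlib

/-!
Put `c = M − 1` and `P(s) = W(s) W(s)ᵀ / c`. Since `S` is symmetric, the ETKBF equation turns
into the Riccati equation `P' = −P S P`, with `P(0) = I / c`. For `A(s) = s S + c I` the defect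
`E(s) = A(s) P(s) − I` then satisfies `E' = S P − A P S P = −E S P`, a linear equation with
`E(0) = 0`, so `E ≡ 0` by uniqueness of solutions of linear ODEs.
-/

open Matrix Set

attribute [local instance] Matrix.normedAddCommGroup Matrix.normedSpace

namespace Matrix

variable {𝕜 : Type*} [NontriviallyNormedField 𝕜] [CompleteSpace 𝕜]
  {l m n : Type*} [Fintype l] [Fintype m] [Fintype n]

noncomputable def mulCLM : Matrix l m 𝕜 →L[𝕜] Matrix m n 𝕜 →L[𝕜] Matrix l n 𝕜 :=
  (mulLinearMap 𝕜).toContinuousBilinearMap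

end Matrix

section MatrixCalculus

variable {𝕜 : Type*} [NontriviallyNormedField 𝕜] [CompleteSpace 𝕜]
  {l m n : Type*} [Fintype l] [Fintype m] [Fintype n] {s : Set 𝕜} {x : 𝕜}

theorem HasDerivWithinAt.matrix_mul {A : 𝕜 → Matrix l m 𝕜} {B : 𝕜 → Matrix m n 𝕜}
    {A' : Matrix l m 𝕜} {B' : Matrix m n 𝕜}
    (hA : HasDerivWithinAt A A' s x) (hB : HasDerivWithinAt B B' s x) :
    HasDerivWithinAt (fun t => A t * B t) (A' * B x + A x * B') s x := by
  rw [add_comm]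
  exact mulCLM.hasDerivWithinAt_of_bilinear hA hB

theorem HasDerivWithinAt.matrix_transpose {A : 𝕜 → Matrix m n 𝕜} {A' : Matrix m n 𝕜}
    (hA : HasDerivWithinAt A A' s x) :
    HasDerivWithinAt (fun t => (A t)ᵀ) A'ᵀ s x :=
  (transposeLinearEquiv m n 𝕜 𝕜).toLinearMap.toContinuousLinearMap.hasFDerivAt
    |>.comp_hasDerivWithinAt x hA

end MatrixCalculus

section LinearODE

variable {E : Type*} [NormedAddCommGroup E] [NormedSpace ℝ E] {f : ℝ → E} {a b : ℝ}

theorem ODE_solution_eqOn_zero_of_linear {B : ℝ → E →L[ℝ] E} (hB : ContinuousOn B (Icc a b))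
    (hf : ∀ t ∈ Icc a b, HasDerivWithinAt f (B t (f t)) (Icc a b) t) (ha : f a = 0) :
    EqOn f 0 (Icc a b) := by
  obtain ⟨K, hK⟩ := isCompact_Icc.exists_bound_of_continuousOn hB
  have hlip (t : ℝ) (ht : t ∈ Ico a b) : LipschitzOnWith K.toNNReal (B t) univ := by
    refine ((B t).lipschitz.weaken ?_).lipschitzOnWith
    rw [← NNReal.coe_le_coe, coe_nnnorm, Real.coe_toNNReal']
    exact (hK t (Ico_subset_Icc_self ht)).trans (le_max_left K 0)
  refine ODE_solution_unique_of_mem_Icc_right hlip (fun t ht => (hf t ht).continuousWithinAt)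
    (fun t ht => (hf t (Ico_subset_Icc_self ht)).mono_of_mem_nhdsWithin
      (Icc_mem_nhdsGE_of_mem ht)) (fun _ _ => mem_univ _) (g := 0) continuousOn_const
    (fun t _ => by rw [Pi.zero_apply, map_zero]; exact hasDerivWithinAt_const t _ 0)
    (fun _ _ => mem_univ _) ha

theorem ODE_solution_eqOn_zero_of_bilinear {F : Type*} [NormedAddCommGroup F] [NormedSpace ℝ F]
    (β : E →L[ℝ] F →L[ℝ] E) {g : ℝ → F} (hg : ContinuousOn g (Icc a b))
    (hf : ∀ t ∈ Icc a b, HasDerivWithinAt f (β (f t) (g t)) (Icc a b) t) (ha : f a = 0) :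
    EqOn f 0 (Icc a b) :=
  ODE_solution_eqOn_zero_of_linear (B := fun t => β.flip (g t))
    (β.flip.continuous.comp_continuousOn hg) hf ha

end LinearODE

theorem hasDerivWithinAt_covariance_of_etkbf {m k : Type*} [Fintype m] [Fintype k] {c : ℝ}
    (hc : c ≠ 0) {S : Matrix m m ℝ} (hS : Sᵀ = S) {W : ℝ → Matrix m k ℝ} {s : Set ℝ} {t : ℝ}
    (hW : HasDerivWithinAt W (-(1 / (2 * c)) • (W t * (W t)ᵀ * S * W t)) s t) :
    HasDerivWithinAt (fun u => c⁻¹ • (W u * (W u)ᵀ))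
      (-(c⁻¹ • (W t * (W t)ᵀ) * S * (c⁻¹ • (W t * (W t)ᵀ)))) s t := by
  refine ((hW.matrix_mul hW.matrix_transpose).const_smul c⁻¹).congr_deriv ?_
  simp only [transpose_smul, transpose_mul, transpose_transpose, hS, smul_mul, Matrix.mul_smul,
    smul_smul, Matrix.mul_assoc, ← add_smul, ← neg_smul]
  congr 1
  field_simp
  ring

theorem riccati_solution_eq_inv {n : Type*} [Fintype n] [DecidableEq n] {S A₀ : Matrix n n ℝ}
    {P : ℝ → Matrix n n ℝ} {T : ℝ}
    (hP : ∀ t ∈ Icc 0 T, HasDerivWithinAt P (-(P t * S * P t)) (Icc 0 T) t)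
    (h₀ : A₀ * P 0 = 1) {t : ℝ} (ht : t ∈ Icc 0 T) : P t = (t • S + A₀)⁻¹ := by
  have hSP : ContinuousOn (fun u => -(S * P u)) (Icc 0 T) := fun u hu =>
    ((mulCLM S).continuous.continuousAt.comp_continuousWithinAt (hP u hu).continuousWithinAt).neg
  have hdefect (u : ℝ) (hu : u ∈ Icc 0 T) : HasDerivWithinAt (fun r => (r • S + A₀) * P r - 1)
      (((u • S + A₀) * P u - 1) * -(S * P u)) (Icc 0 T) u := by
    have hA : HasDerivWithinAt (fun r : ℝ => r • S + A₀) S (Icc 0 T) u :=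
      (((hasDerivWithinAt_id u _).smul_const S).add_const A₀).congr_deriv (one_smul ℝ S)
    refine ((hA.matrix_mul (hP u hu)).sub_const 1).congr_deriv ?_
    noncomm_ring
  have hzero := ODE_solution_eqOn_zero_of_bilinear mulCLM
    (f := fun r => (r • S + A₀) * P r - 1) hSP hdefect (by simp [h₀]) ht
  exact (inv_eq_right_inv (sub_eq_zero.mp hzero)).symm

/-- If `W` solves the ETKBF equation `dW/ds = −(1/(2(M−1))) W Wᵀ S W` with `W(0) = I`,
where `S := (Y^b)ᵀ R⁻¹ Y^b`, then `W(s) W(s)ᵀ/(M−1) = (s·S + (M−1)·I)⁻¹` for all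
`s ∈ [0,1]`; in particular `W(1) W(1)ᵀ/(M−1) = (S + (M−1)·I)⁻¹`, the LETKF analysis
covariance in ensemble space. -/
theorem stmt_16 {L M : ℕ} (hM : 2 ≤ M)
    (Yb : Matrix (Fin L) (Fin M) ℝ) (R : Matrix (Fin L) (Fin L) ℝ) (hR : R.PosDef)
    (S : Matrix (Fin M) (Fin M) ℝ) (hS : S = Ybᵀ * R⁻¹ * Yb)
    (W : ℝ → Matrix (Fin M) (Fin M) ℝ)
    (hW : ∀ s ∈ Set.Icc (0:ℝ) 1,
      HasDerivWithinAt W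
        (-(1 / (2 * ((M : ℝ) - 1))) • (W s * (W s)ᵀ * S * W s))
        (Set.Icc 0 1) s)
    (hW0 : W 0 = 1) :
    (∀ s ∈ Set.Icc (0:ℝ) 1,
      ((M : ℝ) - 1)⁻¹ • (W s * (W s)ᵀ) = (s • S + ((M : ℝ) - 1) • 1)⁻¹) ∧
    ((M : ℝ) - 1)⁻¹ • (W 1 * (W 1)ᵀ) = (S + ((M : ℝ) - 1) • 1)⁻¹ := by
  have hc : (M : ℝ) - 1 ≠ 0 := by
    have : (2 : ℝ) ≤ M := by exact_mod_cast hM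
    linarith
  have hS_symm : Sᵀ = S := by
    simpa [hS, conjTranspose_eq_transpose_of_trivial] using
      (isHermitian_conjTranspose_mul_mul Yb hR.isHermitian.inv).eq
  have h₀ : ((M : ℝ) - 1) • (1 : Matrix (Fin M) (Fin M) ℝ) *
      (((M : ℝ) - 1)⁻¹ • (W 0 * (W 0)ᵀ)) = 1 := by
    simp [hW0, smul_smul, hc]
  have hcov (s : ℝ) (hs : s ∈ Icc 0 1) := riccati_solution_eq_inv
    (P := fun u => ((M : ℝ) - 1)⁻¹ • (W u * (W u)ᵀ))
    (fun t ht => hasDerivWithinAt_covariance_of_etkbf hc hS_symm (hW t ht)) h₀ hs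
  exact ⟨hcov, by simpa using hcov 1 (right_mem_Icc.2 zero_le_one)⟩
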